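/- Suppose R ⊆ [0,1]^E is compact, convex, contains M_G, and every extreme point of R lies in M_G (an integral relaxation oracle; equivalently R = conv(M_G)). Then the projection onto the (ρ,y)-coordinates of the set of triples (ρ,y,x) in the perspective system with x ∈ [0,1]^V equals conv(C_G), the convex hull of the choice probability set. (Theorem 1, local sharpness part.) -/

import Mathlib

/-!
At a point of `C_G` the bounds `L_i` and `U_i` both equal `x_i`, and `L_i` is convex while `U_i`
is concave (each is a sum of affine functions and of maxima/minima of affine functions), so the
projection is a convex set containing `C_G`. Conversely, a projected point has `y = ρ z` with
`z ∈ R`, and `R = conv M_G` by Krein–Milman since `M_G` is finite. Writing `z = ∑ w_k m_k` with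
`m_k ∈ M_G` and `D_k = 1 + ∑_e v_e (m_k)_e`, the normalisation `ρ + ∑_e v_e y_e = 1` says exactly
that the weights `ρ w_k D_k` sum to one, and `(ρ, y) = ∑ ρ w_k D_k • (1, m_k) / D_k` is a convex
combination of points of `C_G`.
-/

open Finset

/-- A vector is binary if each coordinate is 0 or 1. -/
def IsBinaryVec {α : Type*} (x : α → ℝ) : Prop := ∀ i, x i = 0 ∨ x i = 1

variable {N : ℕ}

/-- The denominator `D(x) = 1 + Σ_{c∈E} v_c ∏_{i∈c} x_i`. -/
noncomputable def Dx (E : Finset (Finset (Fin N))) (v : Finset (Fin N) → ℝ)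
    (x : Fin N → ℝ) : ℝ :=
  1 + ∑ c ∈ E, v c * ∏ i ∈ c, x i

/-- The choice probability set `C_G`. -/
def choiceSet (E : Finset (Finset (Fin N))) (v : Finset (Fin N) → ℝ) :
    Set (ℝ × ({e // e ∈ E} → ℝ)) :=
  {p | ∃ x : Fin N → ℝ, IsBinaryVec x ∧ p.1 = 1 / Dx E v x ∧
      ∀ e : {e // e ∈ E}, p.2 e = (∏ i ∈ e.1, x i) / Dx E v x}

/-- The monomial set `M_G`. -/
def monoSet (E : Finset (Finset (Fin N))) : Set ({e // e ∈ E} → ℝ) :=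
  {z | ∃ x : Fin N → ℝ, IsBinaryVec x ∧ ∀ e : {e // e ∈ E}, z e = ∏ i ∈ e.1, x i}

/-- An exact relaxation oracle: `R ⊆ [0,1]^E`, `M_G ⊆ R`, and every `z ∈ R` with binary
singleton coordinates is the corresponding monomial vector. -/
def IsExactOracle (E : Finset (Finset (Fin N)))
    (hsing : ∀ i : Fin N, ({i} : Finset (Fin N)) ∈ E)
    (R : Set ({e // e ∈ E} → ℝ)) : Prop :=
  (∀ z ∈ R, ∀ e : {e // e ∈ E}, z e ∈ Set.Icc (0 : ℝ) 1) ∧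
  monoSet E ⊆ R ∧
  (∀ z ∈ R, (∀ i : Fin N, z ⟨{i}, hsing i⟩ = 0 ∨ z ⟨{i}, hsing i⟩ = 1) →
    ∀ e : {e // e ∈ E}, z e = ∏ i ∈ e.1, z ⟨{i}, hsing i⟩)

/-- `L_i(ρ,y)`. -/
noncomputable def Lb (E : Finset (Finset (Fin N)))
    (hsing : ∀ i : Fin N, ({i} : Finset (Fin N)) ∈ E)
    (v : Finset (Fin N) → ℝ) (ρ : ℝ) (y : {e // e ∈ E} → ℝ) (i : Fin N) : ℝ :=
  y ⟨{i}, hsing i⟩ +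
    ∑ e ∈ E.attach, (if i ∈ e.1 then v e.1 * y e
      else v e.1 * max 0 (y ⟨{i}, hsing i⟩ + y e - ρ))

/-- `U_i(ρ,y)`. -/
noncomputable def Ub (E : Finset (Finset (Fin N)))
    (hsing : ∀ i : Fin N, ({i} : Finset (Fin N)) ∈ E)
    (v : Finset (Fin N) → ℝ) (ρ : ℝ) (y : {e // e ∈ E} → ℝ) (i : Fin N) : ℝ :=
  y ⟨{i}, hsing i⟩ +
    ∑ e ∈ E.attach, (if i ∈ e.1 then v e.1 * y e
      else v e.1 * min (y ⟨{i}, hsing i⟩) (y e))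

/-- The perspective system. -/
noncomputable def persSystem (E : Finset (Finset (Fin N)))
    (hsing : ∀ i : Fin N, ({i} : Finset (Fin N)) ∈ E)
    (v : Finset (Fin N) → ℝ) (R : Set ({e // e ∈ E} → ℝ)) :
    Set (ℝ × ({e // e ∈ E} → ℝ) × (Fin N → ℝ)) :=
  {p | 0 ≤ p.1 ∧ (∃ z ∈ R, p.2.1 = p.1 • z) ∧
      p.1 + ∑ e ∈ E.attach, v e.1 * p.2.1 e = 1 ∧
      ∀ i : Fin N, Lb E hsing v p.1 p.2.1 i ≤ p.2.2 i ∧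
        p.2.2 i ≤ Ub E hsing v p.1 p.2.1 i}

lemma max_zero_add_le_add_max_zero {a b s t : ℝ} (ha : 0 ≤ a) (hb : 0 ≤ b) :
    max 0 (a * s + b * t) ≤ a * max 0 s + b * max 0 t :=
  max_le (by positivity) (add_le_add (mul_le_mul_of_nonneg_left (le_max_right 0 s) ha)
    (mul_le_mul_of_nonneg_left (le_max_right 0 t) hb))

lemma add_min_le_min_add {a b s t s' t' : ℝ} (ha : 0 ≤ a) (hb : 0 ≤ b) :
    a * min s t + b * min s' t' ≤ min (a * s + b * s') (a * t + b * t') :=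
  le_min
    (add_le_add (mul_le_mul_of_nonneg_left (min_le_left s t) ha)
      (mul_le_mul_of_nonneg_left (min_le_left s' t') hb))
    (add_le_add (mul_le_mul_of_nonneg_left (min_le_right s t) ha)
      (mul_le_mul_of_nonneg_left (min_le_right s' t') hb))

lemma convex_perspectiveCone {F : Type*} [AddCommGroup F] [Module ℝ F] {R : Set F}
    (hR : Convex ℝ R) : Convex ℝ {q : ℝ × F | 0 ≤ q.1 ∧ ∃ z ∈ R, q.2 = q.1 • z} := by
  rintro ⟨ρ₁, _⟩ ⟨hρ₁ : 0 ≤ ρ₁, z₁, hz₁, rfl : _ = ρ₁ • z₁⟩ ⟨ρ₂, _⟩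
    ⟨hρ₂ : 0 ≤ ρ₂, z₂, hz₂, rfl : _ = ρ₂ • z₂⟩ a b ha hb hab
  have hρ : 0 ≤ a * ρ₁ + b * ρ₂ := by positivity
  refine ⟨hρ, ?_⟩
  rcases hρ.eq_or_lt with hρ0 | hρpos
  · obtain ⟨h₁, h₂⟩ :=
      (add_eq_zero_iff_of_nonneg (mul_nonneg ha hρ₁) (mul_nonneg hb hρ₂)).mp hρ0.symm
    refine ⟨z₁, hz₁, ?_⟩
    show a • ρ₁ • z₁ + b • ρ₂ • z₂ = (a * ρ₁ + b * ρ₂) • z₁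
    rw [smul_smul, smul_smul, h₁, h₂]
    simp
  · refine ⟨(a * ρ₁ / (a * ρ₁ + b * ρ₂)) • z₁ + (b * ρ₂ / (a * ρ₁ + b * ρ₂)) • z₂,
      hR hz₁ hz₂ (by positivity) (by positivity) (by field_simp), ?_⟩
    show a • ρ₁ • z₁ + b • ρ₂ • z₂ = (a * ρ₁ + b * ρ₂) • _
    rw [smul_add, smul_smul, smul_smul, smul_smul, smul_smul]
    congr 2 <;> field_simp

lemma subset_convexHull_of_extremePoints_subset {F : Type*} [AddCommGroup F] [Module ℝ F]
    [TopologicalSpace F] [IsTopologicalAddGroup F] [ContinuousSMul ℝ F] [LocallyConvexSpace ℝ F]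
    [T2Space F] {R M : Set F} (hRc : IsCompact R) (hRcvx : Convex ℝ R)
    (hext : R.extremePoints ℝ ⊆ M) (hM : M.Finite) : R ⊆ convexHull ℝ M :=
  calc R = closure (convexHull ℝ (R.extremePoints ℝ)) :=
        (closure_convexHull_extremePoints hRc hRcvx).symm
    _ ⊆ closure (convexHull ℝ M) := closure_mono (convexHull_mono hext)
    _ = convexHull ℝ M := (hM.isClosed_convexHull ℝ).closure_eq

lemma mem_convexHull_perspective {F : Type*} [AddCommGroup F] [Module ℝ F] (ℓ : F →ₗ[ℝ] ℝ)
    {M : Set F} (hM : ∀ m ∈ M, 0 < 1 + ℓ m) {ρ : ℝ} {z : F} (hρ : 0 ≤ ρ)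
    (hz : z ∈ convexHull ℝ M) (hρz : ρ * (1 + ℓ z) = 1) :
    (ρ, ρ • z) ∈ convexHull ℝ ((fun m => ((1 + ℓ m)⁻¹, (1 + ℓ m)⁻¹ • m)) '' M) := by
  rw [_root_.convexHull_eq] at hz
  obtain ⟨ι, t, w, m, hw₀, hw₁, hmM, rfl⟩ := hz
  rw [Finset.centerMass_eq_of_sum_1 _ _ hw₁] at hρz ⊢
  have hD : ∀ k ∈ t, 0 < 1 + ℓ (m k) := fun k hk => hM _ (hmM k hk)
  have hμ₁ : ∑ k ∈ t, ρ * w k * (1 + ℓ (m k)) = 1 :=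
    calc ∑ k ∈ t, ρ * w k * (1 + ℓ (m k))
        = ρ * (∑ k ∈ t, w k + ∑ k ∈ t, w k • ℓ (m k)) := by
          rw [← Finset.sum_add_distrib, Finset.mul_sum]
          exact Finset.sum_congr rfl fun k _ => by rw [smul_eq_mul]; ring
      _ = ρ * (1 + ℓ (∑ k ∈ t, w k • m k)) := by simp only [hw₁, map_sum, map_smul]
      _ = 1 := hρz
  have hmem := t.centerMass_mem_convexHull
    (fun k hk => mul_nonneg (mul_nonneg hρ (hw₀ k hk)) (hD k hk).le)
    (by rw [hμ₁]; exact one_pos) (fun k hk => Set.mem_image_of_mem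
      (fun m => ((1 + ℓ m)⁻¹, (1 + ℓ m)⁻¹ • m)) (hmM k hk))
  rw [Finset.centerMass_eq_of_sum_1 _ _ hμ₁] at hmem
  convert hmem using 1
  have hterm : ∀ k ∈ t, (ρ * w k * (1 + ℓ (m k))) • ((1 + ℓ (m k))⁻¹, (1 + ℓ (m k))⁻¹ • m k)
      = (ρ * w k, (ρ * w k) • m k) := fun k hk => by
    rw [Prod.smul_mk, smul_smul, smul_eq_mul, mul_assoc, mul_inv_cancel₀ (hD k hk).ne', mul_one]
  rw [Finset.sum_congr rfl hterm, Prod.ext_iff, Prod.fst_sum, Prod.snd_sum, ← Finset.mul_sum, hw₁,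
    mul_one, Finset.smul_sum]
  simp only [smul_smul, and_self]

noncomputable def weightedSum (E : Finset (Finset (Fin N))) (v : Finset (Fin N) → ℝ) :
    ({e // e ∈ E} → ℝ) →ₗ[ℝ] ℝ :=
  Fintype.linearCombination ℝ fun e => v e.1

lemma weightedSum_apply (E : Finset (Finset (Fin N))) (v : Finset (Fin N) → ℝ)
    (y : {e // e ∈ E} → ℝ) : weightedSum E v y = ∑ e ∈ E.attach, v e.1 * y e := by
  simp [weightedSum, Fintype.linearCombination_apply, Finset.univ_eq_attach, mul_comm]

lemma one_add_weightedSum_eq_Dx {E : Finset (Finset (Fin N))} (v : Finset (Fin N) → ℝ)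
    {x : Fin N → ℝ} {z : {e // e ∈ E} → ℝ} (hz : ∀ e, z e = ∏ i ∈ e.1, x i) :
    1 + weightedSum E v z = Dx E v x := by
  rw [weightedSum_apply, Dx, ← Finset.sum_attach E]
  simp only [hz]

lemma IsBinaryVec.prod_eq_zero_or_one {x : Fin N → ℝ} (hx : IsBinaryVec x) (s : Finset (Fin N)) :
    (∏ i ∈ s, x i) = 0 ∨ (∏ i ∈ s, x i) = 1 := by
  by_cases h : ∀ i ∈ s, x i = 1
  · exact Or.inr (Finset.prod_eq_one h)
  · push Not at h
    obtain ⟨i, hi, hxi⟩ := h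
    exact Or.inl (Finset.prod_eq_zero hi ((hx i).resolve_right hxi))

lemma IsBinaryVec.mul_prod_of_mem {x : Fin N → ℝ} (hx : IsBinaryVec x) {i : Fin N}
    {s : Finset (Fin N)} (hi : i ∈ s) : x i * ∏ j ∈ s, x j = ∏ j ∈ s, x j := by
  rcases hx i with h | h
  · rw [h, Finset.prod_eq_zero hi h, mul_zero]
  · rw [h, one_mul]

lemma Dx_pos {E : Finset (Finset (Fin N))} {v : Finset (Fin N) → ℝ} (hv : ∀ e ∈ E, 0 < v e)
    {x : Fin N → ℝ} (hx : IsBinaryVec x) : 0 < Dx E v x := by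
  have hprod : ∀ c, 0 ≤ ∏ i ∈ c, x i := fun c => by
    rcases hx.prod_eq_zero_or_one c with h | h <;> simp [h]
  have := Finset.sum_nonneg fun c hc => mul_nonneg (hv c hc).le (hprod c)
  unfold Dx
  linarith

lemma monoSet_finite (E : Finset (Finset (Fin N))) : (monoSet E).Finite := by
  refine ((Set.Finite.pi fun _ => (Set.finite_singleton (1 : ℝ)).insert 0).image
    fun x : Fin N → ℝ => fun e : {e // e ∈ E} => ∏ i ∈ e.1, x i).subset ?_
  rintro z ⟨x, hx, hz⟩
  exact ⟨x, fun i _ => hx i, (funext hz).symm⟩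

lemma max_zero_div_add_div_sub_div_of_binary {a b D : ℝ} (hD : 0 < D) (ha : a = 0 ∨ a = 1)
    (hb : b = 0 ∨ b = 1) : max 0 (a / D + b / D - 1 / D) = a * b / D := by
  have : 0 < 1 / D := by positivity
  rcases ha with rfl | rfl <;> rcases hb with rfl | rfl <;> norm_num <;> linarith

lemma min_div_div_of_binary {a b D : ℝ} (hD : 0 < D) (ha : a = 0 ∨ a = 1)
    (hb : b = 0 ∨ b = 1) : min (a / D) (b / D) = a * b / D := by
  rw [min_div_div_right hD.le]
  rcases ha with rfl | rfl <;> rcases hb with rfl | rfl <;> norm_num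

section Vertex

variable {E : Finset (Finset (Fin N))} (hsing : ∀ i : Fin N, ({i} : Finset (Fin N)) ∈ E)
  {v : Finset (Fin N) → ℝ} {x : Fin N → ℝ}

lemma div_Dx_add_sum_eq (hv : ∀ e ∈ E, 0 < v e) (hx : IsBinaryVec x) (i : Fin N) :
    x i / Dx E v x + ∑ e ∈ E.attach, v e.1 * (x i * ∏ j ∈ e.1, x j) / Dx E v x = x i := by
  have hsum : ∑ e ∈ E.attach, v e.1 * (x i * ∏ j ∈ e.1, x j) = x i * (Dx E v x - 1) := by
    rw [← one_add_weightedSum_eq_Dx v (fun _ => rfl), weightedSum_apply, add_sub_cancel_left,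
      Finset.mul_sum]
    exact Finset.sum_congr rfl fun _ _ => by ring
  rw [← Finset.sum_div, hsum]
  field_simp [(Dx_pos hv hx).ne']
  ring

lemma Lb_vertex (hv : ∀ e ∈ E, 0 < v e) (hx : IsBinaryVec x) (i : Fin N) :
    Lb E hsing v (1 / Dx E v x) (fun e => (∏ j ∈ e.1, x j) / Dx E v x) i = x i := by
  unfold Lb
  simp only [Finset.prod_singleton]
  convert div_Dx_add_sum_eq hv hx i using 3 with e
  split_ifs with hie
  · rw [hx.mul_prod_of_mem hie]; ring
  · rw [max_zero_div_add_div_sub_div_of_binary (Dx_pos hv hx) (hx i)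
      (hx.prod_eq_zero_or_one e.1)]
    ring

lemma Ub_vertex (hv : ∀ e ∈ E, 0 < v e) (hx : IsBinaryVec x) (i : Fin N) :
    Ub E hsing v (1 / Dx E v x) (fun e => (∏ j ∈ e.1, x j) / Dx E v x) i = x i := by
  unfold Ub
  simp only [Finset.prod_singleton]
  convert div_Dx_add_sum_eq hv hx i using 3 with e
  split_ifs with hie
  · rw [hx.mul_prod_of_mem hie]; ring
  · rw [min_div_div_of_binary (Dx_pos hv hx) (hx i) (hx.prod_eq_zero_or_one e.1)]
    ring

end Vertex

def persProjection (E : Finset (Finset (Fin N)))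
    (hsing : ∀ i : Fin N, ({i} : Finset (Fin N)) ∈ E) (v : Finset (Fin N) → ℝ)
    (R : Set ({e // e ∈ E} → ℝ)) : Set (ℝ × ({e // e ∈ E} → ℝ)) :=
  {p | ∃ x : Fin N → ℝ, (∀ i, x i ∈ Set.Icc (0 : ℝ) 1) ∧ (p.1, p.2, x) ∈ persSystem E hsing v R}

section Projection

variable {E : Finset (Finset (Fin N))} (hsing : ∀ i : Fin N, ({i} : Finset (Fin N)) ∈ E)
  {v : Finset (Fin N) → ℝ}

lemma Lb_add_le (hv : ∀ e ∈ E, 0 < v e) {a b ρ₁ ρ₂ : ℝ} {y₁ y₂ : {e // e ∈ E} → ℝ}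
    (ha : 0 ≤ a) (hb : 0 ≤ b) (i : Fin N) :
    Lb E hsing v (a * ρ₁ + b * ρ₂) (a • y₁ + b • y₂) i
      ≤ a * Lb E hsing v ρ₁ y₁ i + b * Lb E hsing v ρ₂ y₂ i := by
  unfold Lb
  simp only [Pi.add_apply, Pi.smul_apply, smul_eq_mul]
  rw [mul_add, mul_add, Finset.mul_sum, Finset.mul_sum, add_add_add_comm, ← Finset.sum_add_distrib]
  gcongr with e
  split_ifs
  · exact le_of_eq (by ring)
  · convert mul_le_mul_of_nonneg_left (max_zero_add_le_add_max_zero ha hb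
      (s := y₁ ⟨{i}, hsing i⟩ + y₁ e - ρ₁) (t := y₂ ⟨{i}, hsing i⟩ + y₂ e - ρ₂))
      (hv e.1 e.2).le using 3 <;> ring

lemma Ub_add_ge (hv : ∀ e ∈ E, 0 < v e) {a b ρ₁ ρ₂ : ℝ} {y₁ y₂ : {e // e ∈ E} → ℝ}
    (ha : 0 ≤ a) (hb : 0 ≤ b) (i : Fin N) :
    a * Ub E hsing v ρ₁ y₁ i + b * Ub E hsing v ρ₂ y₂ i
      ≤ Ub E hsing v (a * ρ₁ + b * ρ₂) (a • y₁ + b • y₂) i := by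
  unfold Ub
  simp only [Pi.add_apply, Pi.smul_apply, smul_eq_mul]
  rw [mul_add, mul_add, Finset.mul_sum, Finset.mul_sum, add_add_add_comm, ← Finset.sum_add_distrib]
  gcongr with e
  split_ifs
  · exact le_of_eq (by ring)
  · exact le_of_eq_of_le (by ring)
      (mul_le_mul_of_nonneg_left (add_min_le_min_add ha hb) (hv e.1 e.2).le)

lemma convex_persSystem (hv : ∀ e ∈ E, 0 < v e) {R : Set ({e // e ∈ E} → ℝ)}
    (hR : Convex ℝ R) : Convex ℝ (persSystem E hsing v R) := by
  rintro ⟨ρ₁, y₁, x₁⟩ ⟨hρ₁, hy₁, hsum₁, hx₁⟩ ⟨ρ₂, y₂, x₂⟩ ⟨hρ₂, hy₂, hsum₂, hx₂⟩ a b ha hb hab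
  obtain ⟨hρ, hy⟩ :=
    convex_perspectiveCone hR (x := (ρ₁, y₁)) (y := (ρ₂, y₂)) ⟨hρ₁, hy₁⟩ ⟨hρ₂, hy₂⟩ ha hb hab
  refine ⟨hρ, hy, ?_, fun i => ⟨(Lb_add_le hsing hv ha hb i).trans ?_,
    le_trans ?_ (Ub_add_ge hsing hv ha hb i)⟩⟩
  · simp only [← weightedSum_apply] at hsum₁ hsum₂ ⊢
    simp only [Prod.fst_add, Prod.smul_fst, Prod.snd_add, Prod.smul_snd, map_add, map_smul,
      smul_eq_mul]
    linear_combination a * hsum₁ + b * hsum₂ + hab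
  · exact add_le_add (mul_le_mul_of_nonneg_left (hx₁ i).1 ha)
      (mul_le_mul_of_nonneg_left (hx₂ i).1 hb)
  · exact add_le_add (mul_le_mul_of_nonneg_left (hx₁ i).2 ha)
      (mul_le_mul_of_nonneg_left (hx₂ i).2 hb)

lemma convex_persProjection (hv : ∀ e ∈ E, 0 < v e) {R : Set ({e // e ∈ E} → ℝ)}
    (hR : Convex ℝ R) :
    Convex ℝ (persProjection E hsing v R) := by
  rintro p ⟨x₁, hx₁, h₁⟩ q ⟨x₂, hx₂, h₂⟩ a b ha hb hab
  exact ⟨a • x₁ + b • x₂, fun i => convex_Icc (0 : ℝ) 1 (hx₁ i) (hx₂ i) ha hb hab,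
    convex_persSystem hsing hv hR h₁ h₂ ha hb hab⟩

lemma choiceSet_subset_persProjection (hv : ∀ e ∈ E, 0 < v e) {R : Set ({e // e ∈ E} → ℝ)}
    (hMR : monoSet E ⊆ R) :
    choiceSet E v ⊆ persProjection E hsing v R := by
  rintro ⟨ρ, y⟩ ⟨x, hx, rfl : ρ = _, hy⟩
  obtain rfl : y = fun e => (∏ i ∈ e.1, x i) / Dx E v x := funext hy
  have hD := Dx_pos hv hx
  have hsum := one_add_weightedSum_eq_Dx v (E := E) (z := fun e => ∏ i ∈ e.1, x i) fun _ => rfl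
  refine ⟨x, fun i => ?_, by positivity, ⟨_, hMR ⟨x, hx, fun _ => rfl⟩, ?_⟩, ?_,
    fun i => ⟨(Lb_vertex hsing hv hx i).le, (Ub_vertex hsing hv hx i).ge⟩⟩
  · rcases hx i with h | h <;> simp [h]
  · funext e
    simp only [Pi.smul_apply, smul_eq_mul]
    ring
  · show 1 / Dx E v x + ∑ e ∈ E.attach, v e.1 * ((∏ i ∈ e.1, x i) / Dx E v x) = 1
    rw [weightedSum_apply] at hsum
    simp only [mul_div_assoc']
    rw [← Finset.sum_div, ← add_div, hsum, div_self hD.ne']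

lemma persProjection_subset_convexHull_choiceSet (hv : ∀ e ∈ E, 0 < v e)
    {R : Set ({e // e ∈ E} → ℝ)} (hRc : IsCompact R) (hRcvx : Convex ℝ R)
    (hext : R.extremePoints ℝ ⊆ monoSet E) :
    persProjection E hsing v R ⊆ convexHull ℝ (choiceSet E v) := by
  rintro ⟨ρ, y⟩ ⟨_, -, hρ, ⟨z, hzR, hy⟩, hsum, -⟩
  obtain rfl : y = ρ • z := hy
  have hz := subset_convexHull_of_extremePoints_subset hRc hRcvx hext (monoSet_finite E) hzR
  have hρz : ρ * (1 + weightedSum E v z) = 1 := by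
    simp only [← weightedSum_apply, map_smul, smul_eq_mul] at hsum
    linear_combination hsum
  refine convexHull_mono ?_ (mem_convexHull_perspective (weightedSum E v) ?_ hρ hz hρz)
  · rintro _ ⟨m, ⟨x, hx, hm⟩, rfl⟩
    refine ⟨x, hx, ?_, fun e => ?_⟩
    · simp [one_add_weightedSum_eq_Dx v hm]
    · simp [one_add_weightedSum_eq_Dx v hm, hm e, div_eq_inv_mul]
  · rintro m ⟨x, hx, hm⟩
    rw [one_add_weightedSum_eq_Dx v hm]
    exact Dx_pos hv hx

end Projection

theorem perspective_formulation_locally_sharp_general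
    (N : ℕ)
    (E : Finset (Finset (Fin N)))
    (hsing : ∀ i : Fin N, ({i} : Finset (Fin N)) ∈ E)
    (v : Finset (Fin N) → ℝ) (hv : ∀ e ∈ E, 0 < v e)
    (R : Set ({e // e ∈ E} → ℝ))
    (hRcpt : IsCompact R) (hRcvx : Convex ℝ R)
    (hMGR : monoSet E ⊆ R)
    (hext : Set.extremePoints ℝ R ⊆ monoSet E) :
    {p : ℝ × ({e // e ∈ E} → ℝ) |
        ∃ x : Fin N → ℝ, (∀ i, x i ∈ Set.Icc (0 : ℝ) 1) ∧
          (p.1, p.2, x) ∈ persSystem E hsing v R}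
      = convexHull ℝ (choiceSet E v) :=
  (persProjection_subset_convexHull_choiceSet hsing hv hRcpt hRcvx hext).antisymm
    (convexHull_min (choiceSet_subset_persProjection hsing hv hMGR)
      (convex_persProjection hsing hv hRcvx))

/-- **Theorem 1 (local sharpness part).** If `R ⊆ [0,1]^E` is compact, convex, contains `M_G`
and has all its extreme points in `M_G` (an integral relaxation oracle), then the projection
onto the `(ρ,y)`-coordinates of the triples `(ρ,y,x)` in the perspective system with
`x ∈ [0,1]^V` equals the convex hull of the choice probability set `C_G`. -/
theorem perspective_formulation_locally_sharp
    (N : ℕ) (hN : 1 ≤ N)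
    (E : Finset (Finset (Fin N)))
    (hne : ∀ e ∈ E, e.Nonempty)
    (hsing : ∀ i : Fin N, ({i} : Finset (Fin N)) ∈ E)
    (v : Finset (Fin N) → ℝ) (hv : ∀ e ∈ E, 0 < v e)
    (R : Set ({e // e ∈ E} → ℝ))
    (hR01 : ∀ z ∈ R, ∀ e : {e // e ∈ E}, z e ∈ Set.Icc (0 : ℝ) 1)
    (hRcpt : IsCompact R) (hRcvx : Convex ℝ R)
    (hMGR : monoSet E ⊆ R)
    (hext : Set.extremePoints ℝ R ⊆ monoSet E) :
    {p : ℝ × ({e // e ∈ E} → ℝ) |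
        ∃ x : Fin N → ℝ, (∀ i, x i ∈ Set.Icc (0 : ℝ) 1) ∧
          (p.1, p.2, x) ∈ persSystem E hsing v R}
      = convexHull ℝ (choiceSet E v) :=
  perspective_formulation_locally_sharp_general N E hsing v hv R hRcpt hRcvx hMGR hext
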